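/- arXiv:0710.5518 — 2 statements merged into one kernel-verified Lean document; each statement's English description precedes it below -/
import Mathlib

section
/- In the presented group BV, for n ≥ 2 the Garside element Δ_{n+1} (image of the Garside element of B_{n+1} in BV via the σ_i) can be written as a word of length at most 6n − 7 in the generators {x_0, x_1, σ_1, τ_1} and their inverses. -/
/-!
Relation (C2) moves `x_m` leftwards through `σ_1 ⋯ σ_m`, and (C1) moves it through `Δ_m`, giving
`Δ_{m+1} x_m = x_0 (σ_2 ⋯ σ_{m+1}) Δ_{m+1}`. Since `Δ_{m+2} = σ_1 (σ_2 ⋯ σ_{m+1}) Δ_{m+1}`, this is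
the recursion `Δ_{m+2} = σ_1 x_0⁻¹ Δ_{m+1} x_m`, which unrolls to
`Δ_{n+1} = (σ_1 x_0⁻¹)^{n-1} σ_1 x_1 ⋯ x_{n-1}`. By (A), `x_{i+1} = x_0^{-i} x_1 x_0^i`, so the product
`x_1 ⋯ x_{n-1}` telescopes to `(x_1 x_0⁻¹)^{n-2} x_1 x_0^{n-2}`. The resulting word has length
`5n - 6 ≤ 6n - 7` and does not involve `τ_1`.
-/

/-- Generators of the braided Thompson group `BV`: `Sum.inl i` is `x_i` (for
`i ≥ 0`), `Sum.inr (Sum.inl a)` is `σ_{a+1}` and `Sum.inr (Sum.inr a)` is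
`τ_{a+1}` (so that the σ- and τ-indices range over `i ≥ 1`). -/
abbrev BVGen : Type := ℕ ⊕ (ℕ ⊕ ℕ)

namespace BVPres

/-- `x_i` in the free group on the generators of `BV`. -/
def X (i : ℕ) : FreeGroup BVGen := FreeGroup.of (Sum.inl i)

/-- `σ_{a+1}` in the free group on the generators of `BV`. -/
def S (a : ℕ) : FreeGroup BVGen := FreeGroup.of (Sum.inr (Sum.inl a))

/-- `τ_{a+1}` in the free group on the generators of `BV`. -/
def T (a : ℕ) : FreeGroup BVGen := FreeGroup.of (Sum.inr (Sum.inr a))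

/-- The relators of the presentation of `BV` from Brady–Burillo–Cleary–Stein:
(A) `x_j x_i = x_i x_{j+1}` for `j > i`;
(B1) `σ_i σ_j = σ_j σ_i` for `j - i ≥ 2`;
(B2) `σ_i σ_{i+1} σ_i = σ_{i+1} σ_i σ_{i+1}`;
(B3) `σ_i τ_j = τ_j σ_i` for `j - i ≥ 2`;
(B4) `σ_i τ_{i+1} σ_i = τ_{i+1} σ_i τ_{i+1}`;
(C1) `σ_i x_j = x_j σ_i` for `i < j`;
(C2) `σ_i x_i = x_{i-1} σ_{i+1} σ_i`;
(C3) `σ_i x_j = x_j σ_{i+1}` for `i ≥ j + 2`;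
(C4) `σ_{i+1} x_i = x_{i+1} σ_{i+1} σ_{i+2}`;
(D1) `τ_i x_j = x_j τ_{i+1}` for `i - j ≥ 2`;
(D2) `τ_i x_{i-1} = σ_i τ_{i+1}`;
(D3) `τ_i = x_{i-1} τ_{i+1} σ_i`.
Here σ- and τ-indices are `≥ 1` and are encoded as `a + 1`. -/
def bvRels : Set (FreeGroup BVGen) :=
  {r | (∃ i j : ℕ, i < j ∧ r = X j * X i * (X i * X (j + 1))⁻¹) ∨
       (∃ a b : ℕ, a + 2 ≤ b ∧ r = S a * S b * (S b * S a)⁻¹) ∨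
       (∃ a : ℕ, r = S a * S (a + 1) * S a * (S (a + 1) * S a * S (a + 1))⁻¹) ∨
       (∃ a b : ℕ, a + 2 ≤ b ∧ r = S a * T b * (T b * S a)⁻¹) ∨
       (∃ a : ℕ, r = S a * T (a + 1) * S a * (T (a + 1) * S a * T (a + 1))⁻¹) ∨
       (∃ a j : ℕ, a + 1 < j ∧ r = S a * X j * (X j * S a)⁻¹) ∨
       (∃ a : ℕ, r = S a * X (a + 1) * (X a * S (a + 1) * S a)⁻¹) ∨
       (∃ a j : ℕ, j + 1 ≤ a ∧ r = S a * X j * (X j * S (a + 1))⁻¹) ∨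
       (∃ a : ℕ, r = S a * X a * (X (a + 1) * S a * S (a + 1))⁻¹) ∨
       (∃ a j : ℕ, j + 1 ≤ a ∧ r = T a * X j * (X j * T (a + 1))⁻¹) ∨
       (∃ a : ℕ, r = T a * X a * (S a * T (a + 1))⁻¹) ∨
       (∃ a : ℕ, r = T a * (X a * T (a + 1) * S a)⁻¹)}

end BVPres

/-- The braided Thompson group `BV`, via the presentation of
Brady–Burillo–Cleary–Stein. -/
abbrev BV := PresentedGroup BVPres.bvRels

/-- The generator `x_i` of `BV` (for `i ≥ 0`). -/
def bvx (i : ℕ) : BV := PresentedGroup.of (Sum.inl i)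

/-- The generator `σ_i` of `BV` (meaningful for `i ≥ 1`). -/
def bvσ (i : ℕ) : BV := PresentedGroup.of (Sum.inr (Sum.inl (i - 1)))

/-- The generator `τ_i` of `BV` (meaningful for `i ≥ 1`). -/
def bvτ (i : ℕ) : BV := PresentedGroup.of (Sum.inr (Sum.inr (i - 1)))

/-- The image in `BV` of the Garside element `Δ_m` of the braid group `B_m`
under the homomorphism sending the `i`-th Artin generator to `σ_i`:
the product `(σ_1 ⋯ σ_{m-1})(σ_1 ⋯ σ_{m-2}) ⋯ (σ_1 σ_2) σ_1`. -/
def bvGarside (m : ℕ) : BV :=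
  ((((List.range (m - 1)).reverse).map
      (fun k => ((List.range (k + 1)).map (fun i => bvσ (i + 1))).prod))).prod

/-- Word length with respect to a generating set (and inverses). -/
noncomputable def wordLength {G : Type*} [Group G] (S : Set G) (g : G) : ℕ :=
  sInf {k | ∃ l : List G, (∀ x ∈ l, x ∈ S ∨ x⁻¹ ∈ S) ∧ l.prod = g ∧ l.length = k}

theorem wordLength_list_prod_le {G : Type*} [Group G] {S : Set G} {l : List G}
    (hl : ∀ x ∈ l, x ∈ S ∨ x⁻¹ ∈ S) : wordLength S l.prod ≤ l.length :=
  Nat.sInf_le ⟨l, hl, rfl, rfl⟩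

theorem prod_range_conj_pow {G : Type*} [Group G] (a b : G) (k : ℕ) :
    ((List.range (k + 1)).map fun i => (a ^ i)⁻¹ * b * a ^ i).prod =
      (b * a⁻¹) ^ k * b * a ^ k := by
  induction k with
  | zero => simp
  | succ k ih => rw [List.prod_range_succ, ih, pow_succ (b * a⁻¹)]; group

namespace BV

theorem bvx_succ_mul_bvx_zero (j : ℕ) : bvx (j + 1) * bvx 0 = bvx 0 * bvx (j + 2) :=
  PresentedGroup.mk_eq_mk_of_mul_inv_mem (Or.inl ⟨0, j + 1, j.succ_pos, rfl⟩)

theorem commute_bvσ_bvσ {a b : ℕ} (h : a + 2 ≤ b) : Commute (bvσ (a + 1)) (bvσ (b + 1)) :=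
  PresentedGroup.mk_eq_mk_of_mul_inv_mem (Or.inr (Or.inl ⟨a, b, h, rfl⟩))

theorem commute_bvσ_bvx {a j : ℕ} (h : a + 1 < j) : Commute (bvσ (a + 1)) (bvx j) :=
  PresentedGroup.mk_eq_mk_of_mul_inv_mem
    (Or.inr <| Or.inr <| Or.inr <| Or.inr <| Or.inr <| Or.inl ⟨a, j, h, rfl⟩)

theorem bvσ_mul_bvx (a : ℕ) :
    bvσ (a + 1) * bvx (a + 1) = bvx a * bvσ (a + 2) * bvσ (a + 1) :=
  PresentedGroup.mk_eq_mk_of_mul_inv_mem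
    (Or.inr <| Or.inr <| Or.inr <| Or.inr <| Or.inr <| Or.inr <| Or.inl ⟨a, rfl⟩)

def sigmaRun (i k : ℕ) : BV := ((List.range k).map fun j => bvσ (j + i)).prod

theorem sigmaRun_succ (i k : ℕ) : sigmaRun i (k + 1) = sigmaRun i k * bvσ (k + i) :=
  List.prod_range_succ _ k

theorem sigmaRun_one_succ (k : ℕ) : sigmaRun 1 (k + 1) = bvσ 1 * sigmaRun 2 k := by
  simp only [sigmaRun, List.prod_range_succ']

theorem bvGarside_succ (m : ℕ) : bvGarside (m + 1) = sigmaRun 1 m * bvGarside m := by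
  cases m with
  | zero => simp [bvGarside, sigmaRun]
  | succ m => simp [bvGarside, sigmaRun, List.range_succ]

theorem commute_sigmaRun_bvσ {k b : ℕ} (h : k ≤ b) : Commute (sigmaRun 1 k) (bvσ (b + 2)) :=
  Commute.list_prod_left _ _ fun _ hx => by
    obtain ⟨j, hj, rfl⟩ := List.mem_map.1 hx
    exact commute_bvσ_bvσ (by simp at hj; omega)

theorem commute_sigmaRun_bvx {k j : ℕ} (h : k < j) : Commute (sigmaRun 1 k) (bvx j) :=
  Commute.list_prod_left _ _ fun _ hx => by
    obtain ⟨i, hi, rfl⟩ := List.mem_map.1 hx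
    exact commute_bvσ_bvx (by simp at hi; omega)

theorem commute_bvGarside_bvx {m j : ℕ} (h : m ≤ j) : Commute (bvGarside m) (bvx j) := by
  induction m with
  | zero => exact Commute.one_left _
  | succ m ih =>
    rw [bvGarside_succ]
    exact (commute_sigmaRun_bvx (by omega)).mul_left (ih (by omega))

theorem sigmaRun_mul_bvx (m : ℕ) :
    sigmaRun 1 m * bvx m = bvx 0 * sigmaRun 2 m * sigmaRun 1 m := by
  induction m with
  | zero => simp [sigmaRun]
  | succ m ih =>
    calc sigmaRun 1 (m + 1) * bvx (m + 1)
        = sigmaRun 1 m * bvx m * bvσ (m + 2) * bvσ (m + 1) := by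
          rw [sigmaRun_succ, mul_assoc, bvσ_mul_bvx]; group
      _ = bvx 0 * sigmaRun 2 m * (sigmaRun 1 m * bvσ (m + 2)) * bvσ (m + 1) := by
          rw [ih]; group
      _ = bvx 0 * sigmaRun 2 (m + 1) * sigmaRun 1 (m + 1) := by
          rw [(commute_sigmaRun_bvσ le_rfl).eq, sigmaRun_succ, sigmaRun_succ]; group

theorem bvGarside_succ_succ (m : ℕ) :
    bvGarside (m + 2) = bvσ 1 * (bvx 0)⁻¹ * (bvGarside (m + 1) * bvx m) := by
  have hconj : bvGarside (m + 1) * bvx m = bvx 0 * sigmaRun 2 m * bvGarside (m + 1) := by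
    rw [bvGarside_succ, mul_assoc, (commute_bvGarside_bvx le_rfl).eq, ← mul_assoc,
      sigmaRun_mul_bvx, mul_assoc]
  rw [hconj, bvGarside_succ (m + 1), sigmaRun_one_succ]
  group

theorem bvx_succ_eq_conj (k : ℕ) : bvx (k + 1) = (bvx 0 ^ k)⁻¹ * bvx 1 * bvx 0 ^ k := by
  induction k with
  | zero => simp
  | succ k ih =>
    rw [eq_inv_mul_of_mul_eq (bvx_succ_mul_bvx_zero k).symm, ih, pow_succ]
    group

theorem bvGarside_eq_pow_mul (k : ℕ) :
    bvGarside (k + 2) = (bvσ 1 * (bvx 0)⁻¹) ^ k * bvσ 1 *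
      ((List.range k).map fun i => bvx (i + 1)).prod := by
  induction k with
  | zero => simp [bvGarside]
  | succ k ih =>
    rw [bvGarside_succ_succ, ih, List.prod_range_succ, pow_succ']
    group

theorem bvGarside_eq_word (k : ℕ) :
    bvGarside (k + 3) = (bvσ 1 * (bvx 0)⁻¹) ^ (k + 1) * bvσ 1 *
      ((bvx 1 * (bvx 0)⁻¹) ^ k * bvx 1 * bvx 0 ^ k) := by
  rw [bvGarside_eq_pow_mul (k + 1), funext bvx_succ_eq_conj, prod_range_conj_pow]

end BV

/-- For `n ≥ 2`, the Garside element `Δ_{n+1}` (image in `BV` of the Garside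
element of `B_{n+1}`) has word length at most `6n - 7` with respect to the
finite generating set `{x_0, x_1, σ_1, τ_1}`. -/
theorem bv_garside_length_le (n : ℕ) (hn : 2 ≤ n) :
    wordLength ({bvx 0, bvx 1, bvσ 1, bvτ 1} : Set BV) (bvGarside (n + 1))
      ≤ 6 * n - 7 := by
  obtain ⟨k, rfl⟩ : ∃ k, n = k + 2 := ⟨n - 2, by omega⟩
  let word : List BV := (List.replicate (k + 1) [bvσ 1, (bvx 0)⁻¹]).flatten ++
    bvσ 1 :: (List.replicate k [bvx 1, (bvx 0)⁻¹]).flatten ++ bvx 1 :: List.replicate k (bvx 0)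
  have hprod : word.prod = bvGarside (k + 2 + 1) := by
    simp [word, BV.bvGarside_eq_word, List.prod_flatten, mul_assoc]
  have hlen : word.length = 5 * k + 4 := by
    simp [word]; omega
  calc wordLength _ (bvGarside (k + 2 + 1)) = wordLength _ word.prod := by rw [hprod]
    _ ≤ word.length := wordLength_list_prod_le (by simp only [word]; aesop)
    _ ≤ 6 * (k + 2) - 7 := by omega
end

section
/- In the presented group BV, the relations C2 (σ_i x_i = x_{i−1} σ_{i+1} σ_i) and C3 (σ_i x_j = x_j σ_{i+1} for i ≥ j+2) imply σ_n = x_0^{1−n} σ_1 x_0^{n−1} · c_n for some word c_n in the generators whose length grows at most linearly in n; in particular, each σ_n and τ_n with n ≤ N can be written in the finite generators {x_0, x_1, σ_1, τ_1} with length at most C·N for an absolute constant C. -/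
section WordLength

variable {G : Type*} [Group G] {S : Set G} {g h : G} {k j : ℕ}

/-- Unlike `wordLength`, which is `0` off the subgroup generated by `S`, this bound is compatible
with products. -/
def HasWordLengthLE (S : Set G) (g : G) (k : ℕ) : Prop :=
  ∃ l : List G, (∀ x ∈ l, x ∈ S ∨ x⁻¹ ∈ S) ∧ l.prod = g ∧ l.length ≤ k

namespace HasWordLengthLE

theorem wordLength_le (hg : HasWordLengthLE S g k) : wordLength S g ≤ k := by
  obtain ⟨l, hl, rfl, hk⟩ := hg
  exact le_trans (Nat.sInf_le ⟨l, hl, rfl, rfl⟩) hk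

theorem mono (hg : HasWordLengthLE S g k) (hkj : k ≤ j) : HasWordLengthLE S g j := by
  obtain ⟨l, hl, hprod, hk⟩ := hg
  exact ⟨l, hl, hprod, hk.trans hkj⟩

theorem of_mem (hg : g ∈ S) : HasWordLengthLE S g 1 :=
  ⟨[g], by simp [hg], by simp, by simp⟩

theorem one : HasWordLengthLE S 1 0 :=
  ⟨[], by simp, by simp, le_rfl⟩

theorem mul (hg : HasWordLengthLE S g k) (hh : HasWordLengthLE S h j) :
    HasWordLengthLE S (g * h) (k + j) := by
  obtain ⟨l, hl, rfl, hk⟩ := hg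
  obtain ⟨l', hl', rfl, hj⟩ := hh
  refine ⟨l ++ l', fun x hx => ?_, List.prod_append, by simp; omega⟩
  rcases List.mem_append.mp hx with hx | hx
  exacts [hl x hx, hl' x hx]

theorem inv (hg : HasWordLengthLE S g k) : HasWordLengthLE S g⁻¹ k := by
  obtain ⟨l, hl, rfl, hk⟩ := hg
  refine ⟨(l.map (·⁻¹)).reverse, ?_, (List.prod_inv_reverse l).symm, by simpa using hk⟩
  simp only [List.mem_reverse, List.mem_map]
  rintro _ ⟨x, hx, rfl⟩
  rw [inv_inv]
  exact (hl x hx).symm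

theorem pow (hg : HasWordLengthLE S g k) (n : ℕ) : HasWordLengthLE S (g ^ n) (n * k) := by
  induction n with
  | zero => simpa using one
  | succ n ih => simpa [pow_succ, add_mul] using ih.mul hg

theorem zpow (hg : HasWordLengthLE S g k) (z : ℤ) : HasWordLengthLE S (g ^ z) (z.natAbs * k) := by
  obtain ⟨n, rfl | rfl⟩ := Int.eq_nat_or_neg z
  · simpa using hg.pow n
  · simpa using (hg.pow n).inv

end HasWordLengthLE

end WordLength

theorem eq_inv_pow_mul_mul_pow_of_forall_succ {G : Type*} [Group G] {f : ℕ → G} {a : G}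
    (hf : ∀ k, f (k + 1) = a⁻¹ * f k * a) (m : ℕ) : f m = (a ^ m)⁻¹ * f 0 * a ^ m := by
  induction m with
  | zero => simp
  | succ m ih => rw [hf, ih]; group

namespace BV

open BVPres

-- relation C2 with `i = 1`
theorem bvσ_one_mul_bvx_one : bvσ 1 * bvx 1 = bvx 0 * bvσ 2 * bvσ 1 :=
  PresentedGroup.mk_eq_mk_of_mul_inv_mem (x := S 0 * X 1) (y := X 0 * S 1 * S 0) <| by
    iterate 6 right
    exact Or.inl ⟨0, rfl⟩

-- relation C3 with `j = 0`
theorem bvσ_mul_bvx_zero (a : ℕ) : bvσ (a + 2) * bvx 0 = bvx 0 * bvσ (a + 3) :=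
  PresentedGroup.mk_eq_mk_of_mul_inv_mem (x := S (a + 1) * X 0) (y := X 0 * S (a + 2)) <| by
    iterate 7 right
    exact Or.inl ⟨a + 1, 0, by omega, rfl⟩

-- relation D1 with `j = 0`
theorem bvτ_mul_bvx_zero (a : ℕ) : bvτ (a + 2) * bvx 0 = bvx 0 * bvτ (a + 3) :=
  PresentedGroup.mk_eq_mk_of_mul_inv_mem (x := T (a + 1) * X 0) (y := X 0 * T (a + 2)) <| by
    iterate 9 right
    exact Or.inl ⟨a + 1, 0, by omega, rfl⟩

-- relation D3 with `i = 1`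
theorem bvτ_one : bvτ 1 = bvx 0 * bvτ 2 * bvσ 1 :=
  PresentedGroup.mk_eq_mk_of_mul_inv_mem (x := T 0) (y := X 0 * T 1 * S 0) <| by
    iterate 11 right
    exact ⟨0, rfl⟩

theorem bvσ_two : bvσ 2 = (bvx 0)⁻¹ * bvσ 1 * bvx 1 * (bvσ 1)⁻¹ := by
  rw [mul_assoc _ (bvσ 1), bvσ_one_mul_bvx_one]; group

theorem bvτ_two : bvτ 2 = (bvx 0)⁻¹ * bvτ 1 * (bvσ 1)⁻¹ := by
  rw [bvτ_one]; group

theorem bvσ_add_two (m : ℕ) : bvσ (m + 2) = (bvx 0 ^ m)⁻¹ * bvσ 2 * bvx 0 ^ m :=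
  eq_inv_pow_mul_mul_pow_of_forall_succ (f := fun k => bvσ (k + 2))
    (fun a => by rw [mul_assoc, bvσ_mul_bvx_zero, inv_mul_cancel_left]) m

theorem bvτ_add_two (m : ℕ) : bvτ (m + 2) = (bvx 0 ^ m)⁻¹ * bvτ 2 * bvx 0 ^ m :=
  eq_inv_pow_mul_mul_pow_of_forall_succ (f := fun k => bvτ (k + 2))
    (fun a => by rw [mul_assoc, bvτ_mul_bvx_zero, inv_mul_cancel_left]) m

def finiteGens : Set BV := {bvx 0, bvx 1, bvσ 1, bvτ 1}

theorem hasWordLengthLE_bvx_zero : HasWordLengthLE finiteGens (bvx 0) 1 :=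
  .of_mem (by simp [finiteGens])

theorem hasWordLengthLE_bvx_one : HasWordLengthLE finiteGens (bvx 1) 1 :=
  .of_mem (by simp [finiteGens])

theorem hasWordLengthLE_bvσ_one : HasWordLengthLE finiteGens (bvσ 1) 1 :=
  .of_mem (by simp [finiteGens])

theorem hasWordLengthLE_bvτ_one : HasWordLengthLE finiteGens (bvτ 1) 1 :=
  .of_mem (by simp [finiteGens])

theorem hasWordLengthLE_bvσ {n : ℕ} (hn : 1 ≤ n) : HasWordLengthLE finiteGens (bvσ n) (2 * n) := by
  match n, hn with
  | 1, _ => exact hasWordLengthLE_bvσ_one.mono (by norm_num)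
  | m + 2, _ =>
    rw [bvσ_add_two, bvσ_two]
    have hx := hasWordLengthLE_bvx_zero.pow m
    have hσ := hasWordLengthLE_bvσ_one
    refine ((hx.inv.mul (((hasWordLengthLE_bvx_zero.inv.mul hσ).mul hasWordLengthLE_bvx_one).mul
      hσ.inv)).mul hx).mono ?_
    omega

theorem hasWordLengthLE_bvτ {n : ℕ} (hn : 1 ≤ n) : HasWordLengthLE finiteGens (bvτ n) (2 * n) := by
  match n, hn with
  | 1, _ => exact hasWordLengthLE_bvτ_one.mono (by norm_num)
  | m + 2, _ =>
    rw [bvτ_add_two, bvτ_two]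
    have hx := hasWordLengthLE_bvx_zero.pow m
    refine ((hx.inv.mul ((hasWordLengthLE_bvx_zero.inv.mul hasWordLengthLE_bvτ_one).mul
      hasWordLengthLE_bvσ_one.inv)).mul hx).mono ?_
    omega

end BV

open BV

/-- In `BV`, each `σ_n` can be written as `x_0^{1-n} σ_1 x_0^{n-1} · c_n` with
`c_n` a word in the finite generators `{x_0, x_1, σ_1, τ_1}` of length at most
linear in `n`; in particular every `σ_n` and `τ_n` with `1 ≤ n ≤ N` has word
length at most `C · N` in the finite generators, for an absolute constant `C`. -/
theorem bv_infinite_generators_linear_length :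
    (∃ C : ℕ, 0 < C ∧ ∀ n : ℕ, 1 ≤ n → ∃ c : BV,
        bvσ n = bvx 0 ^ (1 - (n : ℤ)) * bvσ 1 * bvx 0 ^ ((n : ℤ) - 1) * c ∧
        wordLength ({bvx 0, bvx 1, bvσ 1, bvτ 1} : Set BV) c ≤ C * n) ∧
    (∃ C : ℕ, ∀ N n : ℕ, 1 ≤ n → n ≤ N →
        wordLength ({bvx 0, bvx 1, bvσ 1, bvτ 1} : Set BV) (bvσ n) ≤ C * N ∧
        wordLength ({bvx 0, bvx 1, bvσ 1, bvτ 1} : Set BV) (bvτ n) ≤ C * N) := by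
  refine ⟨⟨4, by norm_num, fun n hn => ?_⟩, ⟨2, fun N n hn hnN => ?_⟩⟩
  · set g := bvx 0 ^ (1 - (n : ℤ)) * bvσ 1 * bvx 0 ^ ((n : ℤ) - 1)
    have hg : HasWordLengthLE finiteGens g (2 * n) := by
      refine (((hasWordLengthLE_bvx_zero.zpow _).mul hasWordLengthLE_bvσ_one).mul
        (hasWordLengthLE_bvx_zero.zpow _)).mono ?_
      omega
    exact ⟨g⁻¹ * bvσ n, (mul_inv_cancel_left g _).symm,
      ((hg.inv.mul (hasWordLengthLE_bvσ hn)).mono (by omega)).wordLength_le⟩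
  · exact ⟨((hasWordLengthLE_bvσ hn).mono (by omega)).wordLength_le,
      ((hasWordLengthLE_bvτ hn).mono (by omega)).wordLength_le⟩
end
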